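/- arXiv:1709.07063 — 8 statements merged into one kernel-verified Lean document; each statement's English description precedes it below -/
import Mathlib

section
/- Let L be a lattice equipped with a binary multiplication · and two binary operations \ and /. Then the residuation laws (∀ x y z : L, x·y ≤ z ↔ y ≤ x \ z) and (∀ x y z : L, x·y ≤ z ↔ x ≤ z / y) hold if and only if the following four inequalities hold for all x, y, z : L: x ≤ (x·y ⊔ z)/y; ((x/y) ⊓ z)·y ≤ x; x ≤ y \ (y·x ⊔ z); x·((x \ y) ⊓ z) ≤ y. (This shows that GBI-algebras form a finitely based equational class.) -/
/-!
Each residuation law says that multiplication on one side by a fixed element is lower adjoint to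
the corresponding division. The inequalities characterise Galois connections between lattices
without any monotonicity assumption: if `l a ≤ b`, then `a ≤ u (l a ⊔ b) = u b`; if `a ≤ u b`,
then `l a = l (u b ⊓ a) ≤ b`.
-/

theorem galoisConnection_iff_le_u_l_sup_and_l_u_inf_le {α β : Type*} [SemilatticeInf α]
    [SemilatticeSup β] {l : α → β} {u : β → α} :
    GaloisConnection l u ↔ (∀ a c, a ≤ u (l a ⊔ c)) ∧ ∀ b c, l (u b ⊓ c) ≤ b := by
  refine ⟨fun gc => ⟨fun a c => gc.le_u le_sup_left, fun b c => gc.l_le inf_le_left⟩, ?_⟩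
  rintro ⟨le_u_l_sup, l_u_inf_le⟩ a b
  constructor
  · intro h
    simpa only [sup_eq_right.mpr h] using le_u_l_sup a b
  · intro h
    simpa only [inf_eq_right.mpr h] using l_u_inf_le b a

/-- A lattice with a multiplication and two division operations satisfies both
residuation laws iff the four displayed inequalities hold. -/
theorem gbi_residuation_iff_ineqs {L : Type*} [Lattice L]
    (mul ldiv rdiv : L → L → L) :
    ((∀ x y z : L, mul x y ≤ z ↔ y ≤ ldiv x z) ∧
      (∀ x y z : L, mul x y ≤ z ↔ x ≤ rdiv z y)) ↔
    ((∀ x y z : L, x ≤ rdiv (mul x y ⊔ z) y) ∧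
      (∀ x y z : L, mul (rdiv x y ⊓ z) y ≤ x) ∧
      (∀ x y z : L, x ≤ ldiv y (mul y x ⊔ z)) ∧
      (∀ x y z : L, mul x (ldiv x y ⊓ z) ≤ y)) := by
  have left := forall_congr' fun x =>
    galoisConnection_iff_le_u_l_sup_and_l_u_inf_le (l := mul x) (u := ldiv x)
  have right := forall_congr' fun y =>
    galoisConnection_iff_le_u_l_sup_and_l_u_inf_le (l := (mul · y)) (u := (rdiv · y))
  simp only [GaloisConnection, forall_and] at left right
  -- what remains is reordering quantifiers and conjuncts
  grind
end

section
/- Every join-perfect complete Heyting algebra is meet-perfect (hence a perfect lattice): if A is a frame (complete Heyting algebra) such that every element a of A is the supremum of the set of completely join-irreducible elements below a, then every element a of A is the infimum of the set of completely meet-irreducible elements above a. -/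
/-- An element of a complete lattice is completely join-irreducible if the
supremum of the elements strictly below it is strictly below it. -/
def CompletelyJoinIrreducible {A : Type*} [CompleteLattice A] (a : A) : Prop :=
  sSup {x | x < a} < a

/-- An element of a complete lattice is completely meet-irreducible if the
infimum of the elements strictly above it is strictly above it. -/
def CompletelyMeetIrreducible {A : Type*} [CompleteLattice A] (a : A) : Prop :=
  a < sInf {x | a < x}

/-!
If `c` is completely join-irreducible in a frame and `c⁻ = sSup {x | x < c}`, then
`m = c ⇨ c⁻` is the largest element not above `c`: `x ≤ m ↔ x ⊓ c ≤ c⁻ ↔ x ⊓ c < c ↔ ¬ c ≤ x`.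
Every element strictly above `m` is then above `c`, so `m` is completely meet-irreducible.
If `¬ c ≤ a`, then `a ≤ m` while `¬ c ≤ m`; so every completely join-irreducible element below
the infimum of the completely meet-irreducible elements above `a` lies below `a`, and
join-perfectness finishes the proof.
-/

theorem completelyMeetIrreducible_of_le_iff_not_le {A : Type*} [CompleteLattice A] {m c : A}
    (hm : ∀ x, x ≤ m ↔ ¬ c ≤ x) : CompletelyMeetIrreducible m := by
  have hc_le : c ≤ sInf {x | m < x} :=
    le_sInf fun x hx => not_not.mp fun hcx => hx.not_ge ((hm x).2 hcx)
  have hc_not_le : ¬ c ≤ m := (hm m).1 le_rfl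
  exact lt_of_le_not_ge (le_sInf fun _ hx => hx.le) fun hle => hc_not_le (hc_le.trans hle)

theorem CompletelyJoinIrreducible.le_himp_iff_not_le {A : Type*} [Order.Frame A] {c : A}
    (hc : CompletelyJoinIrreducible c) (x : A) :
    x ≤ c ⇨ sSup {y | y < c} ↔ ¬ c ≤ x := by
  rw [le_himp_iff, ← inf_lt_right]
  exact ⟨fun hle => hle.trans_lt hc, fun hlt => le_sSup hlt⟩

/-- Every join-perfect complete Heyting algebra (frame) is meet-perfect. -/
theorem joinPerfect_frame_meetPerfect {A : Type*} [Order.Frame A]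
    (h : ∀ a : A, a = sSup {x | CompletelyJoinIrreducible x ∧ x ≤ a}) :
    ∀ a : A, a = sInf {x | CompletelyMeetIrreducible x ∧ a ≤ x} := by
  intro a
  refine le_antisymm (le_sInf fun _ hx => hx.2) ((h _).le.trans (sSup_le ?_))
  rintro c ⟨hc, hc_le⟩
  by_contra hca
  have hm := hc.le_himp_iff_not_le
  have hmS : sInf {x | CompletelyMeetIrreducible x ∧ a ≤ x} ≤ c ⇨ sSup {y | y < c} :=
    sInf_le ⟨completelyMeetIrreducible_of_le_iff_not_le hm, (hm a).2 hca⟩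
  exact (hm c).1 (hc_le.trans hmS) le_rfl
end

section
/- Let W, W' be types and N : W → W' → Prop. For X ⊆ W define γ(X) = {z ∈ W | ∀ y : W', (∀ x ∈ X, N x y) → N z y}. Let ∘ : W → W → Set W be a ternary relation, lifted to sets by X ∘ Y = ⋃ over x ∈ X, y ∈ Y of x ∘ y, and suppose there exist operations ⧹ : W → W' → Set W' and ⫽ : W' → W → Set W' satisfying the nuclear condition: for all x y : W and z : W', (∀ w ∈ x ∘ y, N w z) ↔ (∀ u ∈ z ⫽ y, N x u) and (∀ w ∈ x ∘ y, N w z) ↔ (∀ u ∈ x ⧹ z, N y u). Then γ is a closure operator on the powerset of W (X ⊆ γ(X), X ⊆ Y implies γ(X) ⊆ γ(Y), and γ(γ(X)) = γ(X)), and moreover γ is a nucleus: γ(X) ∘ γ(Y) ⊆ γ(X ∘ Y) for all X, Y ⊆ W. -/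
/-!
`galClose N` is the closure operator `extentClosure N` of the polarity induced by `N`. By the
nuclear condition, for fixed `z` and `x` the set of `y` with `x ∘ y ⊆ lowerPolar N {z}` is the
polar `lowerPolar N (x ⧹ z)`, hence closed; symmetrically in `x` via `z ⫽ y`. So the inclusion
`X ∘ Y ⊆ lowerPolar N {z}` survives replacing first `Y` by `γ Y` and then `X` by `γ X`.
-/

/-- The Galois closure operator determined by a relation `N : W → W' → Prop`. -/
def galClose {W W' : Type*} (N : W → W' → Prop) (X : Set W) : Set W :=
  {z | ∀ y : W', (∀ x ∈ X, N x y) → N z y}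

/-- Lifting of a ternary relation on `W` to an operation on subsets of `W`. -/
def liftRel {W : Type*} (comp : W → W → Set W) (X Y : Set W) : Set W :=
  ⋃ x ∈ X, ⋃ y ∈ Y, comp x y

open Set Order

section

variable {W W' : Type*} {N : W → W' → Prop}

theorem galClose_eq_extentClosure (X : Set W) : galClose N X = extentClosure N X := rfl

theorem galClose_subset_lowerPolar {X : Set W} {T : Set W'} (h : X ⊆ lowerPolar N T) :
    galClose N X ⊆ lowerPolar N T :=
  isExtent_lowerPolar.lowerPolar_upperPolar_subset h

theorem liftRel_galClose_subset {comp : W → W → Set W} {ldiv : W → W' → Set W'}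
    {rdiv : W' → W → Set W'}
    (hr : ∀ x y z, (∀ w ∈ comp x y, N w z) ↔ ∀ u ∈ rdiv z y, N x u)
    (hl : ∀ x y z, (∀ w ∈ comp x y, N w z) ↔ ∀ u ∈ ldiv x z, N y u) (X Y : Set W) :
    liftRel comp (galClose N X) (galClose N Y) ⊆ galClose N (liftRel comp X Y) := by
  intro w hw z hz
  simp only [liftRel, mem_iUnion] at hw hz
  obtain ⟨a, ha, b, hb, hw⟩ := hw
  have hb' : ∀ x ∈ X, b ∈ lowerPolar N (ldiv x z) := fun x hx =>
    galClose_subset_lowerPolar (fun y hy => (hl x y z).1 fun w hw => hz w ⟨x, hx, y, hy, hw⟩) hb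
  have ha' : a ∈ lowerPolar N (rdiv z b) :=
    galClose_subset_lowerPolar (fun x hx => (hr x b z).1 ((hl x b z).2 (hb' x hx))) ha
  exact (hr a b z).2 ha' w hw

end

/-- If the nuclear condition holds then the Galois closure `γ` is a closure
operator on the powerset of `W`, and moreover a nucleus:
`γ(X) ∘ γ(Y) ⊆ γ(X ∘ Y)`. -/
theorem galClose_isNucleus {W W' : Type*} (N : W → W' → Prop)
    (comp : W → W → Set W) (ldiv : W → W' → Set W') (rdiv : W' → W → Set W')
    (hnuc : ∀ (x y : W) (z : W'),
      ((∀ w ∈ comp x y, N w z) ↔ ∀ u ∈ rdiv z y, N x u) ∧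
      ((∀ w ∈ comp x y, N w z) ↔ ∀ u ∈ ldiv x z, N y u)) :
    (∀ X : Set W, X ⊆ galClose N X) ∧
    (∀ X Y : Set W, X ⊆ Y → galClose N X ⊆ galClose N Y) ∧
    (∀ X : Set W, galClose N (galClose N X) = galClose N X) ∧
    (∀ X Y : Set W,
      liftRel comp (galClose N X) (galClose N Y) ⊆ galClose N (liftRel comp X Y)) := by
  refine ⟨fun X => ?_, fun X Y hXY => ?_, fun X => ?_,
    liftRel_galClose_subset (fun x y z => (hnuc x y z).1) (fun x y z => (hnuc x y z).2)⟩ <;>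
    simp only [galClose_eq_extentClosure]
  exacts [(extentClosure N).le_closure X, (extentClosure N).monotone hXY,
    (extentClosure N).idempotent X]
end

section
/- Let A be a GBI-algebra and let F, G be filters of A. Then the upward closure ↑(FG) of the set FG = {a·b | a ∈ F, b ∈ G} is a filter of A: it is nonempty, upward closed, and closed under binary meets. -/
/-!
Residuation makes multiplication monotone in each argument, so `(a₁ ⊓ a₂) * (b₁ ⊓ b₂)` lies
below both `a₁ * b₁` and `a₂ * b₂`; hence the meet of two elements of `↑(FG)` is again
above a product from `FG`.
-/

/-- A (lattice) filter: a nonempty, upward-closed subset closed under binary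
meets. -/
def IsLatticeFilter {A : Type*} [Lattice A] (F : Set A) : Prop :=
  F.Nonempty ∧ (∀ x ∈ F, ∀ y : A, x ≤ y → y ∈ F) ∧ (∀ x ∈ F, ∀ y ∈ F, x ⊓ y ∈ F)

theorem monotone_mul_left_of_residuated {A : Type*} [Preorder A] [Mul A]
    (ldiv : A → A → A) (hld : ∀ x y z : A, x * y ≤ z ↔ y ≤ ldiv x z) (a : A) :
    Monotone (a * ·) :=
  fun _ b' hb => (hld a _ _).2 (hb.trans ((hld a b' _).1 le_rfl))

theorem monotone_mul_right_of_residuated {A : Type*} [Preorder A] [Mul A]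
    (rdiv : A → A → A) (hrd : ∀ x y z : A, x * y ≤ z ↔ x ≤ rdiv z y) (b : A) :
    Monotone (· * b) :=
  fun _ a' ha => (hrd _ b _).2 (ha.trans ((hrd a' b _).1 le_rfl))

theorem IsLatticeFilter.upperClosure_image2 {α β γ : Type*} [Lattice α] [Lattice β]
    [Lattice γ] {f : α → β → γ} (hf_left : ∀ b, Monotone (f · b))
    (hf_right : ∀ a, Monotone (f a)) {F : Set α} {G : Set β}
    (hF : IsLatticeFilter F) (hG : IsLatticeFilter G) :
    IsLatticeFilter {z : γ | ∃ a ∈ F, ∃ b ∈ G, f a b ≤ z} := by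
  obtain ⟨⟨a, ha⟩, -, hF_inf⟩ := hF
  obtain ⟨⟨b, hb⟩, -, hG_inf⟩ := hG
  have hf : ∀ {a a' b b'}, a ≤ a' → b ≤ b' → f a b ≤ f a' b' :=
    fun ha hb => (hf_left _ ha).trans (hf_right _ hb)
  refine ⟨⟨f a b, a, ha, b, hb, le_rfl⟩, ?_, ?_⟩
  · rintro x ⟨a, ha, b, hb, hx⟩ y hxy
    exact ⟨a, ha, b, hb, hx.trans hxy⟩
  · rintro x ⟨a₁, ha₁, b₁, hb₁, hx⟩ y ⟨a₂, ha₂, b₂, hb₂, hy⟩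
    exact ⟨a₁ ⊓ a₂, hF_inf _ ha₁ _ ha₂, b₁ ⊓ b₂, hG_inf _ hb₁ _ hb₂,
      le_inf ((hf inf_le_left inf_le_left).trans hx) ((hf inf_le_right inf_le_right).trans hy)⟩

/-- In a GBI-algebra, the upward closure of the elementwise product `FG` of two
filters `F`, `G` is again a filter. -/
theorem upclosure_filter_product_isFilter {A : Type*} [HeytingAlgebra A] [Monoid A]
    (ldiv rdiv : A → A → A)
    (hld : ∀ x y z : A, x * y ≤ z ↔ y ≤ ldiv x z)
    (hrd : ∀ x y z : A, x * y ≤ z ↔ x ≤ rdiv z y)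
    (F G : Set A) (hF : IsLatticeFilter F) (hG : IsLatticeFilter G) :
    IsLatticeFilter {z : A | ∃ a ∈ F, ∃ b ∈ G, a * b ≤ z} :=
  hF.upperClosure_image2 (monotone_mul_right_of_residuated rdiv hrd)
    (monotone_mul_left_of_residuated ldiv hld) hG
end

section
/- Let A be a GBI-algebra, let F and G be filters of A, and let H be a prime filter of A such that FG ⊆ H (i.e. a·b ∈ H for all a ∈ F, b ∈ G). Then there exist prime filters F' and G' of A with F ⊆ F', G ⊆ G', F'G ⊆ H, FG' ⊆ H and F'G' ⊆ H. -/
/-- A prime filter: a proper filter such that `x ⊔ y ∈ H` implies `x ∈ H` or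
`y ∈ H`. -/
def IsPrimeLatticeFilter {A : Type*} [Lattice A] (H : Set A) : Prop :=
  IsLatticeFilter H ∧ H ≠ Set.univ ∧ ∀ x y : A, x ⊔ y ∈ H → x ∈ H ∨ y ∈ H

/-!
Fix a filter `T` and a prime filter `H`. Because `H` is prime and multiplication, being
residuated, preserves finite joins in each argument, the elements `a` with `a * b ∉ H` for some
`b ∈ T` form a lattice ideal; `FT ⊆ H` says exactly that `F` is disjoint from it. The prime filter
theorem for distributive lattices then enlarges `F` to a prime filter `F'` still disjoint from
that ideal, i.e. with `F'T ⊆ H`. Doing this first for `F` against `T = G`, and then for `G`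
against `T = F'` (multiplying on the other side), gives `F'` and `G'`.
-/

open Order

section Lattice

variable {A : Type*} [Lattice A] {F H : Set A}

theorem IsLatticeFilter.mem_of_le (hF : IsLatticeFilter F) {x y : A} (hxy : x ≤ y)
    (hx : x ∈ F) : y ∈ F :=
  hF.2.1 x hx y hxy

theorem isLatticeFilter_iff_isPFilter : IsLatticeFilter F ↔ IsPFilter F := by
  refine ⟨fun hF => .of_def hF.1 ?_ fun hxy hx => hF.mem_of_le hxy hx, fun hF => ?_⟩
  · exact fun x hx y hy => ⟨x ⊓ y, hF.2.2 x hx y hy, inf_le_left, inf_le_right⟩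
  · let F' := hF.toPFilter
    exact ⟨F'.nonempty, fun _ hx _ hxy => F'.mem_of_le hxy hx,
      fun x hx y hy => F'.inf_mem hx hy⟩

theorem IsLatticeFilter.bot_notMem [OrderBot A] (hH : IsLatticeFilter H) (hne : H ≠ Set.univ) :
    (⊥ : A) ∉ H :=
  fun hbot => hne (Set.eq_univ_of_forall fun _ => hH.mem_of_le bot_le hbot)

theorem Order.Ideal.IsPrime.isPrimeLatticeFilter_compl {J : Ideal A} (hJ : J.IsPrime) :
    IsPrimeLatticeFilter (J : Set A)ᶜ := by
  refine ⟨isLatticeFilter_iff_isPFilter.2 hJ.compl_filter, ?_, fun x y hxy => ?_⟩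
  · exact fun h => J.nonempty.ne_empty (Set.compl_univ_iff.1 h)
  · exact not_and_or.1 (Ideal.sup_mem_iff.not.1 hxy)

end Lattice

theorem IsLatticeFilter.exists_isPrimeLatticeFilter_disjoint {A : Type*} [DistribLattice A]
    {F : Set A} (hF : IsLatticeFilter F) {I : Ideal A} (hFI : Disjoint F I) :
    ∃ F' : Set A, IsPrimeLatticeFilter F' ∧ F ⊆ F' ∧ Disjoint F' I := by
  obtain ⟨J, hJ, hIJ, hFJ⟩ :=
    DistribLattice.prime_ideal_of_disjoint_filter_ideal
      (F := (isLatticeFilter_iff_isPFilter.1 hF).toPFilter) hFI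
  exact ⟨(J : Set A)ᶜ, hJ.isPrimeLatticeFilter_compl, hFJ.subset_compl_right,
    disjoint_compl_left.mono_right hIJ⟩

theorem isIdeal_setOf_exists_notMem {A : Type*} [Lattice A] [OrderBot A] (m : A → A → A)
    (hsup : ∀ a a' b, m (a ⊔ a') b = m a b ⊔ m a' b) (hbot : ∀ b, m ⊥ b = ⊥)
    (hmono : ∀ a, Monotone (m a)) {T H : Set A} (hT : IsLatticeFilter T)
    (hH : IsPrimeLatticeFilter H) : IsIdeal {a | ∃ b ∈ T, m a b ∉ H} := by
  obtain ⟨hHfilter, hHne, hHprime⟩ := hH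
  have hmono' (b : A) : Monotone (m · b) := fun a a' haa' =>
    calc m a b ≤ m a b ⊔ m a' b := le_sup_left
      _ = m a' b := by rw [← hsup, sup_eq_right.2 haa']
  refine ⟨fun a a' haa' ⟨b, hb, hab⟩ => ⟨b, hb, fun h => hab ?_⟩, ?_, ?_⟩
  · exact hHfilter.mem_of_le (hmono' b haa') h
  · obtain ⟨b, hb⟩ := hT.1
    exact ⟨⊥, b, hb, by rw [hbot]; exact hHfilter.bot_notMem hHne⟩
  · rintro a ⟨b, hb, hab⟩ a' ⟨b', hb', hab'⟩
    refine ⟨a ⊔ a', ⟨b ⊓ b', hT.2.2 b hb b' hb', fun h => ?_⟩, le_sup_left, le_sup_right⟩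
    rcases hHprime _ _ (hsup a a' _ ▸ h) with h | h
    · exact hab (hHfilter.mem_of_le (hmono a inf_le_left) h)
    · exact hab' (hHfilter.mem_of_le (hmono a' inf_le_right) h)

theorem IsLatticeFilter.exists_isPrimeLatticeFilter_forall_mem {A : Type*} [DistribLattice A]
    [OrderBot A] (m : A → A → A) (hsup : ∀ a a' b, m (a ⊔ a') b = m a b ⊔ m a' b)
    (hbot : ∀ b, m ⊥ b = ⊥) (hmono : ∀ a, Monotone (m a)) {F T H : Set A}
    (hF : IsLatticeFilter F) (hT : IsLatticeFilter T) (hH : IsPrimeLatticeFilter H)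
    (hFT : ∀ a ∈ F, ∀ b ∈ T, m a b ∈ H) :
    ∃ F' : Set A, IsPrimeLatticeFilter F' ∧ F ⊆ F' ∧ ∀ a ∈ F', ∀ b ∈ T, m a b ∈ H := by
  have hdisj {K : Set A} :
      Disjoint K {a | ∃ b ∈ T, m a b ∉ H} ↔ ∀ a ∈ K, ∀ b ∈ T, m a b ∈ H := by
    simp [Set.disjoint_left]
  obtain ⟨F', hF', hFF', hF'I⟩ := hF.exists_isPrimeLatticeFilter_disjoint
    (I := (isIdeal_setOf_exists_notMem m hsup hbot hmono hT hH).toIdeal) (hdisj.2 hFT)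
  exact ⟨F', hF', hFF', hdisj.1 hF'I⟩

/-- In a GBI-algebra, if `F, G` are filters and `H` a prime filter with
`FG ⊆ H`, then `F` and `G` can be extended to prime filters `F'`, `G'` with
`F'G ⊆ H`, `FG' ⊆ H` and `F'G' ⊆ H`. -/
theorem prime_filter_product_extension {A : Type*} [HeytingAlgebra A] [Monoid A]
    (ldiv rdiv : A → A → A)
    (hld : ∀ x y z : A, x * y ≤ z ↔ y ≤ ldiv x z)
    (hrd : ∀ x y z : A, x * y ≤ z ↔ x ≤ rdiv z y)
    (F G H : Set A) (hF : IsLatticeFilter F) (hG : IsLatticeFilter G)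
    (hH : IsPrimeLatticeFilter H)
    (hFG : ∀ a ∈ F, ∀ b ∈ G, a * b ∈ H) :
    ∃ F' G' : Set A, IsPrimeLatticeFilter F' ∧ IsPrimeLatticeFilter G' ∧
      F ⊆ F' ∧ G ⊆ G' ∧
      (∀ a ∈ F', ∀ b ∈ G, a * b ∈ H) ∧
      (∀ a ∈ F, ∀ b ∈ G', a * b ∈ H) ∧
      (∀ a ∈ F', ∀ b ∈ G', a * b ∈ H) := by
  have gc_mul_left (a : A) : GaloisConnection (a * ·) (ldiv a) := hld a
  have gc_mul_right (b : A) : GaloisConnection (· * b) (rdiv · b) := fun a c => hrd a b c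
  obtain ⟨F', hF', hFF', hF'G⟩ := hF.exists_isPrimeLatticeFilter_forall_mem (· * ·)
    (fun a a' b => (gc_mul_right b).l_sup) (fun b => (gc_mul_right b).l_bot)
    (fun a => (gc_mul_left a).monotone_l) hG hH hFG
  obtain ⟨G', hG', hGG', hF'G'⟩ := hG.exists_isPrimeLatticeFilter_forall_mem (fun b a => a * b)
    (fun b b' a => (gc_mul_left a).l_sup) (fun a => (gc_mul_left a).l_bot)
    (fun b => (gc_mul_right b).monotone_l) hF'.1 hH fun b hb a ha => hF'G a ha b hb
  exact ⟨F', G', hF', hG', hFF', hGG', hF'G, fun a ha b hb => hF'G' b hb a (hFF' ha),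
    fun a ha b hb => hF'G' b hb a ha⟩
end

section
/- Let M be a generalized PPM with preorder ⊑, partial operation op and unit set E. For X, Y ⊆ M define X · Y = {z | ∃ x ∈ X, ∃ y ∈ Y, ∃ w, op x y = some w ∧ w ⊑ z}, and let ↑E = {z | ∃ e ∈ E, e ⊑ z}. Then: (a) X · Y is ⊑-upward closed for all X, Y ⊆ M; (b) the lifted operation is associative: (X · Y) · Z = X · (Y · Z) for all X, Y, Z ⊆ M; (c) ↑E is a two-sided unit on upward-closed sets: if X is ⊑-upward closed then ↑E · X = X = X · ↑E; (d) the lifted operation distributes over arbitrary unions in each argument: X · (⋃ i, Y i) = ⋃ i, (X · Y i) and (⋃ i, X i) · Y = ⋃ i, (X i · Y). (Hence the complex algebra of upward-closed subsets of a generalized PPM is a GBI-algebra.) -/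
/-!
Associativity and the unit laws of the lifted product come from the corresponding laws of
the PPM once a witness `x · y ⊑ p` for a factor `p` is pushed into the outer product by
bifunctoriality; upward closure of the sets absorbs the remaining `⊑`-slack. Every left-hand
law is the right-hand law of the opposite PPM, with the operation flipped.
-/

/-- A generalized PPM: a preordered partial monoid, with the partial binary
operation encoded via `Option`, a set `E` of units, associativity and unit laws
holding up to the equivalence `x ≡ y := le x y ∧ le y x`, and bifunctoriality
of the operation with respect to the preorder. -/
structure IsGenPPM {M : Type*} (le : M → M → Prop) (op : M → M → Option M)
    (E : Set M) : Prop where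
  refl : ∀ x, le x x
  trans : ∀ {x y z}, le x y → le y z → le x z
  assoc_right : ∀ {x y z xy w}, op x y = some xy → op xy z = some w →
    ∃ yz w', op y z = some yz ∧ op x yz = some w' ∧ le w w' ∧ le w' w
  assoc_left : ∀ {x y z yz w}, op y z = some yz → op x yz = some w →
    ∃ xy w', op x y = some xy ∧ op xy z = some w' ∧ le w w' ∧ le w' w
  unitSet_closed : ∀ {e x}, e ∈ E → le e x → le x e → x ∈ E
  unit_right_ex : ∀ x, ∃ e ∈ E, ∃ w, op x e = some w
  unit_right : ∀ {x e w}, e ∈ E → op x e = some w → le w x ∧ le x w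
  unit_left_ex : ∀ x, ∃ e ∈ E, ∃ w, op e x = some w
  unit_left : ∀ {x e w}, e ∈ E → op e x = some w → le w x ∧ le x w
  bifunc : ∀ {x x' y y' w'}, le x x' → le y y' → op x' y' = some w' →
    ∃ w, op x y = some w ∧ le w w'

/-- The lifting of the partial operation of a generalized PPM to subsets:
`X · Y = {z | ∃ x ∈ X, y ∈ Y, x·y is defined and x·y ⊑ z}`. -/
def ppmMul {M : Type*} (le : M → M → Prop) (op : M → M → Option M)
    (X Y : Set M) : Set M :=
  {z | ∃ x ∈ X, ∃ y ∈ Y, ∃ w, op x y = some w ∧ le w z}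

section ComplexAlgebra

variable {M : Type*} {le : M → M → Prop} {op : M → M → Option M} {E : Set M}

def IsUpClosed (le : M → M → Prop) (X : Set M) : Prop :=
  ∀ x ∈ X, ∀ z, le x z → z ∈ X

def upClosure (le : M → M → Prop) (S : Set M) : Set M :=
  {z | ∃ e ∈ S, le e z}

theorem ppmMul_flip (X Y : Set M) : ppmMul le (flip op) X Y = ppmMul le op Y X := by
  ext z
  constructor <;> rintro ⟨x, hx, y, hy, w, hw, hwz⟩ <;> exact ⟨y, hy, x, hx, w, hw, hwz⟩

theorem IsGenPPM.flip (h : IsGenPPM le op E) : IsGenPPM le (flip op) E where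
  refl := h.refl
  trans := h.trans
  assoc_right hxy hw := h.assoc_left hxy hw
  assoc_left hyz hw := h.assoc_right hyz hw
  unitSet_closed := h.unitSet_closed
  unit_right_ex := h.unit_left_ex
  unit_right := h.unit_left
  unit_left_ex := h.unit_right_ex
  unit_left := h.unit_right
  bifunc hx hy hw := h.bifunc hy hx hw

theorem ppmMul_iUnion_right {ι : Type*} (X : Set M) (Y : ι → Set M) :
    ppmMul le op X (⋃ i, Y i) = ⋃ i, ppmMul le op X (Y i) := by
  ext z
  simp only [ppmMul, Set.mem_iUnion, Set.mem_ofPred_eq]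
  constructor
  · rintro ⟨x, hx, y, ⟨i, hy⟩, w, hw⟩
    exact ⟨i, x, hx, y, hy, w, hw⟩
  · rintro ⟨i, x, hx, y, hy, w, hw⟩
    exact ⟨x, hx, y, ⟨i, hy⟩, w, hw⟩

theorem ppmMul_iUnion_left {ι : Type*} (X : ι → Set M) (Y : Set M) :
    ppmMul le op (⋃ i, X i) Y = ⋃ i, ppmMul le op (X i) Y := by
  simp only [← ppmMul_flip (op := op), ppmMul_iUnion_right]

theorem isUpClosed_ppmMul (htrans : ∀ {x y z}, le x y → le y z → le x z) (X Y : Set M) :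
    IsUpClosed le (ppmMul le op X Y) := by
  rintro z ⟨x, hx, y, hy, w, hw, hwz⟩ z' hzz'
  exact ⟨x, hx, y, hy, w, hw, htrans hwz hzz'⟩

theorem mem_ppmMul_of_op_eq (hrefl : ∀ x, le x x) {X Y : Set M} {x y w : M} (hx : x ∈ X)
    (hy : y ∈ Y) (hw : op x y = some w) : w ∈ ppmMul le op X Y :=
  ⟨x, hx, y, hy, w, hw, hrefl w⟩

namespace IsGenPPM

variable (h : IsGenPPM le op E)
include h

theorem ppmMul_assoc_subset (X Y Z : Set M) :
    ppmMul le op (ppmMul le op X Y) Z ⊆ ppmMul le op X (ppmMul le op Y Z) := by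
  rintro z ⟨p, ⟨a, ha, b, hb, ab, hab, habp⟩, c, hc, w, hw, hwz⟩
  obtain ⟨w', hw', hw'w⟩ := h.bifunc habp (h.refl c) hw
  obtain ⟨bc, w'', hbc, hw'', -, hw''w'⟩ := h.assoc_right hab hw'
  exact ⟨a, ha, bc, mem_ppmMul_of_op_eq h.refl hb hc hbc, w'', hw'',
    h.trans hw''w' (h.trans hw'w hwz)⟩

theorem ppmMul_assoc (X Y Z : Set M) :
    ppmMul le op (ppmMul le op X Y) Z = ppmMul le op X (ppmMul le op Y Z) := by
  refine (h.ppmMul_assoc_subset X Y Z).antisymm ?_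
  simpa only [ppmMul_flip] using h.flip.ppmMul_assoc_subset Z Y X

theorem ppmMul_upClosure_right {X : Set M} (hX : IsUpClosed le X) :
    ppmMul le op X (upClosure le E) = X := by
  ext z
  constructor
  · rintro ⟨x, hx, e', ⟨e, he, hee'⟩, w, hw, hwz⟩
    obtain ⟨w₀, hw₀, hw₀w⟩ := h.bifunc (h.refl x) hee' hw
    exact hX x hx z (h.trans (h.unit_right he hw₀).2 (h.trans hw₀w hwz))
  · intro hz
    obtain ⟨e, he, w, hw⟩ := h.unit_right_ex z
    exact ⟨z, hz, e, ⟨e, he, h.refl e⟩, w, hw, (h.unit_right he hw).1⟩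

theorem ppmMul_upClosure_left {X : Set M} (hX : IsUpClosed le X) :
    ppmMul le op (upClosure le E) X = X := by
  rw [← ppmMul_flip, h.flip.ppmMul_upClosure_right hX]

end IsGenPPM

end ComplexAlgebra

/-- In a generalized PPM: the lifted product of two sets is upward closed; the
lifted product is associative; the upward closure of `E` is a two-sided unit on
upward closed sets; and the lifted product distributes over arbitrary unions in
each argument.  (Hence the complex algebra of a generalized PPM is a
GBI-algebra.) -/
theorem genPPM_complex_algebra {M : Type*} (le : M → M → Prop)
    (op : M → M → Option M) (E : Set M) (h : IsGenPPM le op E) :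
    (∀ X Y : Set M, ∀ z ∈ ppmMul le op X Y, ∀ z', le z z' → z' ∈ ppmMul le op X Y) ∧
    (∀ X Y Z : Set M,
      ppmMul le op (ppmMul le op X Y) Z = ppmMul le op X (ppmMul le op Y Z)) ∧
    (∀ X : Set M, (∀ x ∈ X, ∀ z, le x z → z ∈ X) →
      ppmMul le op {z | ∃ e ∈ E, le e z} X = X ∧
      ppmMul le op X {z | ∃ e ∈ E, le e z} = X) ∧
    (∀ (ι : Type*) (X : Set M) (Y : ι → Set M),
      ppmMul le op X (⋃ i, Y i) = ⋃ i, ppmMul le op X (Y i)) ∧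
    (∀ (ι : Type*) (X : ι → Set M) (Y : Set M),
      ppmMul le op (⋃ i, X i) Y = ⋃ i, ppmMul le op (X i) Y) :=
  ⟨fun X Y => isUpClosed_ppmMul (le := le) (op := op) h.trans X Y,
    h.ppmMul_assoc,
    fun _ hX => ⟨h.ppmMul_upClosure_left hX, h.ppmMul_upClosure_right hX⟩,
    fun _ => ppmMul_iUnion_right,
    fun _ => ppmMul_iUnion_left⟩
end

section
/- Let M be a PME that is right-cancellative (if x·y and x·y' are both defined and x·y ≡ x·y', then y ≡ y') and satisfies indivisibility of units (if x·y is defined and x·y ∈ E, then x ∈ E). Then the equivalence associated to the substate relation coincides with the original equivalence: if x ⪯ y and y ⪯ x then x ≡ y. -/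
/-- A partial monoid up to equivalence (PME): a partial binary operation
(encoded via `Option`), a set `E` of units, and an equivalence relation `eqv`,
with associativity and unit laws holding up to `eqv`, and the operation
bifunctorial with respect to `eqv`. -/
structure IsPME {M : Type*} (op : M → M → Option M) (E : Set M)
    (eqv : M → M → Prop) : Prop where
  refl : ∀ x, eqv x x
  symm : ∀ {x y}, eqv x y → eqv y x
  trans : ∀ {x y z}, eqv x y → eqv y z → eqv x z
  assoc_right : ∀ {x y z xy w}, op x y = some xy → op xy z = some w →
    ∃ yz w', op y z = some yz ∧ op x yz = some w' ∧ eqv w w'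
  assoc_left : ∀ {x y z yz w}, op y z = some yz → op x yz = some w →
    ∃ xy w', op x y = some xy ∧ op xy z = some w' ∧ eqv w w'
  unitSet_closed : ∀ {e x}, e ∈ E → eqv e x → x ∈ E
  unit_right_ex : ∀ x, ∃ e ∈ E, ∃ w, op x e = some w
  unit_right : ∀ {x e w}, e ∈ E → op x e = some w → eqv w x
  unit_left_ex : ∀ x, ∃ e ∈ E, ∃ w, op e x = some w
  unit_left : ∀ {x e w}, e ∈ E → op e x = some w → eqv w x
  bifunc : ∀ {x x' y y' w'}, eqv x x' → eqv y y' → op x' y' = some w' →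
    ∃ w, op x y = some w ∧ eqv w w'

/-- The centre `C_M` of a PME: the elements that commute (up to `eqv`) with
every element with which they compose. -/
def pmeCentre {M : Type*} (op : M → M → Option M) (eqv : M → M → Prop) : Set M :=
  {x | (∀ y w, op x y = some w → ∃ y' w', op y' x = some w' ∧ eqv w w') ∧
       (∀ y w, op y x = some w → ∃ y' w', op x y' = some w' ∧ eqv w w')}

/-- The substate relation: `x ⪯ y` iff `x·z ≡ y` for some central `z`. -/
def pmeSubstate {M : Type*} (op : M → M → Option M) (eqv : M → M → Prop)
    (x y : M) : Prop :=
  ∃ z ∈ pmeCentre op eqv, ∃ w, op x z = some w ∧ eqv w y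

/-!
If `x·z ≡ y` and `y·z' ≡ x`, then `x·(z·z') ≡ x ≡ x·e` for a unit `e`, so right cancellation
gives `z·z' ≡ e`. Hence `z·z'` is a unit, so is `z` by indivisibility, and `y ≡ x·z ≡ x`.
-/

namespace IsPME

variable {M : Type*} {op : M → M → Option M} {E : Set M} {eqv : M → M → Prop}

theorem exists_op_op_eqv_of_op_eqv (h : IsPME op E eqv) {x y z z' w u : M}
    (hxz : op x z = some w) (hwy : eqv w y) (hyz' : op y z' = some u) :
    ∃ zz' v, op z z' = some zz' ∧ op x zz' = some v ∧ eqv v u := by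
  obtain ⟨w', hwz', hw'u⟩ := h.bifunc hwy (h.refl z') hyz'
  obtain ⟨zz', v, hzz', hxzz', hw'v⟩ := h.assoc_right hxz hwz'
  exact ⟨zz', v, hzz', hxzz', h.trans (h.symm hw'v) hw'u⟩

theorem mem_of_op_eqv_self (h : IsPME op E eqv)
    (hcancel : ∀ x y y' w w' : M, op x y = some w → op x y' = some w' →
      eqv w w' → eqv y y')
    {x z w : M} (hxz : op x z = some w) (hwx : eqv w x) : z ∈ E := by
  obtain ⟨e, he, u, hxe⟩ := h.unit_right_ex x
  have hze : eqv z e := hcancel x z e w u hxz hxe (h.trans hwx (h.symm (h.unit_right he hxe)))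
  exact h.unitSet_closed he (h.symm hze)

end IsPME

/-- In a right-cancellative PME with indivisibility of units, the equivalence
associated to the substate relation coincides with the original
equivalence. -/
theorem pmeSubstate_antisymm_of_cancellative {M : Type*} (op : M → M → Option M)
    (E : Set M) (eqv : M → M → Prop) (h : IsPME op E eqv)
    (hcancel : ∀ x y y' w w' : M, op x y = some w → op x y' = some w' →
      eqv w w' → eqv y y')
    (hindiv : ∀ x y w : M, op x y = some w → w ∈ E → x ∈ E) :
    ∀ x y : M, pmeSubstate op eqv x y → pmeSubstate op eqv y x → eqv x y := by
  rintro x y ⟨z, -, w, hxz, hwy⟩ ⟨z', -, u, hyz', hux⟩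
  obtain ⟨zz', v, hzz', hxzz', hvu⟩ := h.exists_op_op_eqv_of_op_eqv hxz hwy hyz'
  have hzz'_mem : zz' ∈ E := h.mem_of_op_eqv_self hcancel hxzz' (h.trans hvu hux)
  have hz_mem : z ∈ E := hindiv z z' zz' hzz' hzz'_mem
  exact h.trans (h.symm (h.unit_right hz_mem hxz)) hwy
end

section
/- Let M be a PME, and let A, B ⊆ M be upward closed under the substate relation ⪯. Suppose B satisfies: for all b ∈ B and c ∈ C_M, if b·c is defined then b·c ∈ C_M. Then A · B ⊆ A, where A · B = {z | ∃ a ∈ A, ∃ b ∈ B, a·b is defined and a·b ⪯ z}. (In particular, in the intuitionistic complex algebra of a commutative PME the weakening law x·y ≤ x holds for such B.) -/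
theorem IsPME.substate_of_op_substate {M : Type*} {op : M → M → Option M} {E : Set M}
    {eqv : M → M → Prop} (h : IsPME op E eqv) {a b w z : M}
    (hb : ∀ c ∈ pmeCentre op eqv, ∀ bc, op b c = some bc → bc ∈ pmeCentre op eqv)
    (hab : op a b = some w) (hwz : pmeSubstate op eqv w z) :
    pmeSubstate op eqv a z := by
  obtain ⟨c, hc, v, hwc, hvz⟩ := hwz
  obtain ⟨bc, v', hbc, habc, hvv'⟩ := h.assoc_right hab hwc
  exact ⟨bc, hb c hc bc hbc, v', habc, h.trans (h.symm hvv') hvz⟩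

theorem pme_weakening_general {M : Type*} (op : M → M → Option M) (E : Set M)
    (eqv : M → M → Prop) (h : IsPME op E eqv)
    (A B : Set M)
    (hA : ∀ a ∈ A, ∀ z, pmeSubstate op eqv a z → z ∈ A)
    (hBC : ∀ b ∈ B, ∀ c ∈ pmeCentre op eqv, ∀ w, op b c = some w →
      w ∈ pmeCentre op eqv) :
    {z | ∃ a ∈ A, ∃ b ∈ B, ∃ w, op a b = some w ∧ pmeSubstate op eqv w z} ⊆ A := by
  rintro z ⟨a, ha, b, hb, w, hab, hwz⟩
  exact hA a ha z (h.substate_of_op_substate (hBC b hb) hab hwz)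

/-- Weakening in the intuitionistic complex algebra of a PME: if `A`, `B` are
upward closed under the substate relation and every defined product of an
element of `B` with a central element is central, then `A · B ⊆ A`. -/
theorem pme_weakening {M : Type*} (op : M → M → Option M) (E : Set M)
    (eqv : M → M → Prop) (h : IsPME op E eqv)
    (A B : Set M)
    (hA : ∀ a ∈ A, ∀ z, pmeSubstate op eqv a z → z ∈ A)
    (hB : ∀ b ∈ B, ∀ z, pmeSubstate op eqv b z → z ∈ B)
    (hBC : ∀ b ∈ B, ∀ c ∈ pmeCentre op eqv, ∀ w, op b c = some w →
      w ∈ pmeCentre op eqv) :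
    {z | ∃ a ∈ A, ∃ b ∈ B, ∃ w, op a b = some w ∧ pmeSubstate op eqv w z} ⊆ A :=
  pme_weakening_general op E eqv h A B hA hBC
end
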